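/- Let (g, D) be an axial pair for an action of G on X, M = m(e). For wild w define i(w) = ⌊(min I(w) + max I(w))/2⌋ where I(w) = {i : w(gⁱD) unbounded}. Then for any two wild elements u, v ∈ G, |i(u) − i(v)| ≤ m(uv⁻¹) + 2M. -/
import Mathlib


open Pointwise

section AxialDefs

variable {G : Type*} [Group G] {X : Type*} [MulAction G X]

/-- A subset of `X` is *bounded* (w.r.t. `g` and the fundamental domain `D`)
if it is contained in a finite union of translates `g^i • D`. -/
def Bdd (g : G) (D : Set X) (B : Set X) : Prop :=
  ∃ s : Finset ℤ, B ⊆ ⋃ i ∈ s, (g ^ i) • D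

/-- An element is *tame* if it translates bounded sets to bounded sets. -/
def Tame (g : G) (D : Set X) (t : G) : Prop :=
  ∀ B : Set X, Bdd g D B → Bdd g D (t • B)

/-- `D` is a fundamental domain for the action of `⟨g⟩`: `X` is the disjoint
union of the translates `g^n • D`. -/
def FundDom (g : G) (D : Set X) : Prop :=
  ∀ x : X, ∃! n : ℤ, x ∈ (g ^ n) • D

/-- `(g, D)` is an *axial pair*. -/
def AxialPair (g : G) (D : Set X) : Prop :=
  FundDom g D ∧
  {t : G | Tame g D t ∧ (t • D ∩ D).Nonempty}.Finite ∧
  ∀ h : G, ∃ B : Set X, Bdd g D B ∧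
    ∀ w : G, ¬ Bdd g D ((h * w) • D) →
      ∃ n : ℤ, w • B ∪ (g ^ n) • B = Set.univ

/-- The interval `D_{[a,b]} = ∪_{i=a}^{b} g^i • D`. -/
def Dint (g : G) (D : Set X) (a b : ℤ) : Set X :=
  ⋃ i ∈ Set.Icc a b, (g ^ i) • D

/-- `m` witnesses Axiom 2 (in the interval form (2')) for `h`. -/
def mOK (g : G) (D : Set X) (h : G) (m : ℕ) : Prop :=
  ∀ w : G, ¬ Bdd g D ((h * w) • D) →
    ∃ n : ℤ, w • Dint g D (-(m : ℤ)) (m : ℤ) ∪ (g ^ n) • Dint g D (-(m : ℤ)) (m : ℤ) = Set.univ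

/-- `m(h)`: the minimal `m` as in Axiom (2'). -/
noncomputable def mval (g : G) (D : Set X) (h : G) : ℕ :=
  sInf {m : ℕ | mOK g D h m}

/-- `I(w) = {i ∈ ℤ : w·(gⁱD) is unbounded}`. -/
def Iset (g : G) (D : Set X) (w : G) : Set ℤ :=
  {i : ℤ | ¬ Bdd g D ((w * g ^ i) • D)}

/-- The wilderness center `i(w) = ⌊(min I(w) + max I(w))/2⌋`. -/
noncomputable def ic (g : G) (D : Set X) (w : G) : ℤ :=
  Int.fdiv (sInf (Iset g D w) + sSup (Iset g D w)) 2

end AxialDefs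


section AxialProofs

variable {G : Type*} [Group G] {X : Type*} [MulAction G X]

lemma bdd_mono {g : G} {D B C : Set X} (hBC : B ⊆ C) (hC : Bdd g D C) : Bdd g D B := by
  obtain ⟨s, hs⟩ := hC
  exact ⟨s, hBC.trans hs⟩

lemma bdd_union {g : G} {D B C : Set X} (hB : Bdd g D B) (hC : Bdd g D C) :
    Bdd g D (B ∪ C) := by
  obtain ⟨s, hs⟩ := hB
  obtain ⟨t, ht⟩ := hC
  refine ⟨s ∪ t, Set.union_subset ?_ ?_⟩ <;> intro x hx
  · obtain ⟨i, hi, hxi⟩ := Set.mem_iUnion₂.1 (hs hx)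
    exact Set.mem_iUnion₂.2 ⟨i, Finset.mem_union_left _ hi, hxi⟩
  · obtain ⟨i, hi, hxi⟩ := Set.mem_iUnion₂.1 (ht hx)
    exact Set.mem_iUnion₂.2 ⟨i, Finset.mem_union_right _ hi, hxi⟩

lemma bdd_biUnion {g : G} {D : Set X} (s : Finset ℤ) (f : ℤ → Set X)
    (hf : ∀ i ∈ s, Bdd g D (f i)) : Bdd g D (⋃ i ∈ s, f i) := by
  classical
  induction s using Finset.induction_on with
  | empty => exact ⟨∅, by simp⟩
  | @insert a t ha ih =>
    rw [Finset.set_biUnion_insert]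
    exact bdd_union (hf a (Finset.mem_insert_self a t))
      (ih fun i hi => hf i (Finset.mem_insert_of_mem hi))

lemma bdd_smul_Dint {g : G} {D : Set X} (n a b : ℤ) :
    Bdd g D ((g ^ n) • Dint g D a b) := by
  refine ⟨Finset.Icc (a + n) (b + n), ?_⟩
  rintro x ⟨y, hy, rfl⟩
  obtain ⟨i, hi, hyi⟩ := Set.mem_iUnion₂.1 hy
  obtain ⟨d, hd, rfl⟩ := hyi
  refine Set.mem_iUnion₂.2 ⟨n + i, ?_, ?_⟩
  · rw [Set.mem_Icc] at hi
    simp only [Finset.mem_Icc]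
    omega
  · refine ⟨d, hd, ?_⟩
    show (g ^ (n + i)) • d = (g ^ n) • (g ^ i) • d
    rw [smul_smul, ← zpow_add]

lemma bdd_subset_Dint {g : G} {D B : Set X} (hB : Bdd g D B) :
    ∃ m : ℕ, B ⊆ Dint g D (-(m : ℤ)) (m : ℤ) := by
  obtain ⟨s, hs⟩ := hB
  refine ⟨s.sup Int.natAbs, fun x hx => ?_⟩
  obtain ⟨i, hi, hxi⟩ := Set.mem_iUnion₂.1 (hs hx)
  refine Set.mem_iUnion₂.2 ⟨i, ?_, hxi⟩
  have := Finset.le_sup (f := Int.natAbs) hi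
  rw [Set.mem_Icc]
  omega

lemma mOK_mval {g : G} {D : Set X} (hax : AxialPair g D) (h : G) :
    mOK g D h (mval g D h) := by
  have hne : {m : ℕ | mOK g D h m}.Nonempty := by
    obtain ⟨B, hBbdd, hB⟩ := hax.2.2 h
    obtain ⟨m, hBm⟩ := bdd_subset_Dint hBbdd
    refine ⟨m, fun w hw => ?_⟩
    obtain ⟨n, hn⟩ := hB w hw
    refine ⟨n, Set.eq_univ_of_univ_subset ?_⟩
    rw [← hn]
    exact Set.union_subset_union (Set.smul_set_mono hBm) (Set.smul_set_mono hBm)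
  exact Nat.sInf_mem hne

lemma fund_unique {g : G} {D : Set X} (hf : FundDom g D) {i j : ℤ} {x : X}
    (hi : x ∈ (g ^ i) • D) (hj : x ∈ (g ^ j) • D) : i = j := by
  obtain ⟨n, _, hn⟩ := hf x
  rw [hn i hi, hn j hj]

lemma iset_subset {g : G} {D : Set X} (hax : AxialPair g D) (h v : G) (m : ℕ)
    (hm : mOK g D h m) {j : ℤ} (hj : j ∈ Iset g D (h * v)) :
    Iset g D v ⊆ Set.Icc (j - (m : ℤ)) (j + (m : ℤ)) := by
  have hw : ¬ Bdd g D ((h * (v * g ^ j)) • D) := by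
    have : h * (v * g ^ j) = h * v * g ^ j := by group
    rw [this]
    exact hj
  obtain ⟨n, hn⟩ := hm (v * g ^ j) hw
  intro k hk
  by_contra hknot
  apply hk
  refine bdd_mono ?_ (bdd_smul_Dint n (-(m : ℤ)) (m : ℤ))
  intro x hx
  have hxu : x ∈ (v * g ^ j) • Dint g D (-(m : ℤ)) (m : ℤ) ∪
      (g ^ n) • Dint g D (-(m : ℤ)) (m : ℤ) := hn ▸ Set.mem_univ x
  rcases hxu with hx1 | hx2
  · exfalso
    obtain ⟨y, hy, hyx⟩ := hx1
    obtain ⟨i, hi, hyi⟩ := Set.mem_iUnion₂.1 hy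
    obtain ⟨d, _, rfl⟩ := hyi
    obtain ⟨z, hz, hzx⟩ := hx
    simp only [mul_smul] at hyx hzx
    have hcan : (g ^ j) • (g ^ i) • d = (g ^ k) • z := by
      apply smul_left_cancel v
      rw [hyx, hzx]
    have hp1 : (g ^ j) • (g ^ i) • d ∈ (g ^ (j + i)) • D := by
      refine ⟨d, ‹d ∈ D›, ?_⟩
      show (g ^ (j + i)) • d = (g ^ j) • (g ^ i) • d
      rw [smul_smul, ← zpow_add]
    have hp2 : (g ^ j) • (g ^ i) • d ∈ (g ^ k) • D := by
      rw [hcan]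
      exact ⟨z, hz, rfl⟩
    have hjk : j + i = k := fund_unique hax.1 hp1 hp2
    rw [Set.mem_Icc] at hi
    exact hknot (Set.mem_Icc.2 ⟨by omega, by omega⟩)
  · exact hx2

lemma iset_nonempty {g : G} {D : Set X} {w : G} (hw : ¬ Tame g D w) :
    (Iset g D w).Nonempty := by
  by_contra hne
  rw [Set.not_nonempty_iff_eq_empty] at hne
  apply hw
  intro B hB
  obtain ⟨s, hs⟩ := hB
  refine bdd_mono (C := ⋃ i ∈ s, (w * g ^ i) • D) ?_ ?_
  · rintro x ⟨b, hb, rfl⟩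
    obtain ⟨i, hi, hbi⟩ := Set.mem_iUnion₂.1 (hs hb)
    obtain ⟨d, hd, rfl⟩ := hbi
    refine Set.mem_iUnion₂.2 ⟨i, hi, ⟨d, hd, ?_⟩⟩
    show (w * g ^ i) • d = w • (g ^ i) • d
    rw [mul_smul]
  · refine bdd_biUnion s _ fun i _ => ?_
    by_contra hbd
    have : i ∈ Iset g D w := hbd
    rw [hne] at this
    exact this

lemma ic_mem_Icc {g : G} {D : Set X} (hax : AxialPair g D) {w : G}
    (hw : ¬ Tame g D w) {j : ℤ} (hj : j ∈ Iset g D w) :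
    ic g D w ∈ Set.Icc (j - (mval g D 1 : ℤ)) (j + (mval g D 1 : ℤ)) := by
  set M : ℕ := mval g D 1 with hM
  have hj' : j ∈ Iset g D (1 * w) := by
    simp only [Iset, Set.mem_setOf_eq, one_mul]
    exact hj
  have hsub : Iset g D w ⊆ Set.Icc (j - (M : ℤ)) (j + (M : ℤ)) :=
    iset_subset hax 1 w M (mOK_mval hax 1) hj'
  have hne := iset_nonempty hw
  have hbb : BddBelow (Iset g D w) := ⟨j - (M : ℤ), fun k hk => (Set.mem_Icc.1 (hsub hk)).1⟩
  have hba : BddAbove (Iset g D w) := ⟨j + (M : ℤ), fun k hk => (Set.mem_Icc.1 (hsub hk)).2⟩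
  have ha := Set.mem_Icc.1 (hsub (Int.csInf_mem hne hbb))
  have hb := Set.mem_Icc.1 (hsub (Int.csSup_mem hne hba))
  rw [Set.mem_Icc, ic, Int.fdiv_eq_ediv_of_nonneg _ (by norm_num)]
  omega

end AxialProofs

/-- for wild `u, v`, `|i(u) − i(v)| ≤ m(uv⁻¹) + 2M`. -/
theorem ic_coarse_lipschitz {G : Type*} [Group G] {X : Type*} [MulAction G X]
    [Nonempty X] (g : G) (D : Set X) (hax : AxialPair g D)
    (u v : G) (hu : ¬ Tame g D u) (hv : ¬ Tame g D v) :
    |ic g D u - ic g D v| ≤ (mval g D (u * v⁻¹) : ℤ) + 2 * (mval g D 1 : ℤ) := by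
  obtain ⟨j, hj⟩ := iset_nonempty hu
  obtain ⟨k, hk⟩ := iset_nonempty hv
  have hj' : j ∈ Iset g D (u * v⁻¹ * v) := by
    rw [inv_mul_cancel_right]
    exact hj
  have hsub := iset_subset hax (u * v⁻¹) v (mval g D (u * v⁻¹))
    (mOK_mval hax (u * v⁻¹)) hj'
  have hjk := Set.mem_Icc.1 (hsub hk)
  have hicu := Set.mem_Icc.1 (ic_mem_Icc hax hu hj)
  have hicv := Set.mem_Icc.1 (ic_mem_Icc hax hv hk)
  rw [abs_le]
  omega
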